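/- Suppose L is a set of literals of φ containing, for each i ∈ [1;m], exactly one of x_i and ¬x_i, and such that every clause of φ contains a literal of L. Then the positional Player-0 strategy σ defined by choosing, for each clause vertex c_i, the edge (c_i, y) for some literal y of C_i with y ∈ L (and the self-loop at t) is a winning strategy for Player 0 from v0 in the augmented reachability game 𝔊^φ. -/
import Mathlib


universe u

/-- A two-player game graph: finite-intended vertex set `V`, an ownership function
(`owner v = 0` means `v` is a Player-0 vertex, `owner v = 1` a Player-1 vertex),
and an edge relation such that every vertex has at least one outgoing edge. -/
structure GameGraph (V : Type u) where
  owner : V → Fin 2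
  E : V → V → Prop
  exists_succ : ∀ v, ∃ w, E v w

variable {V : Type u}

/-- A play of the game graph: an infinite sequence of vertices following edges. -/
def IsPlay (G : GameGraph V) (ρ : ℕ → V) : Prop :=
  ∀ k, G.E (ρ k) (ρ (k + 1))

/-- A (history-dependent) strategy: given the list of previously visited
vertices and the current vertex, it chooses a next vertex. -/
abbrev Strategy (V : Type u) := List V → V → V

/-- A strategy of Player `i` is valid if at each Player-`i` vertex it chooses
an edge of the game graph. -/
def StratValid (G : GameGraph V) (i : Fin 2) (σ : Strategy V) : Prop :=
  ∀ (h : List V) (v : V), G.owner v = i → G.E v (σ h v)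

/-- A positional (memoryless) strategy ignores the history. -/
def Positional (σ : Strategy V) : Prop :=
  ∀ (h h' : List V) (v : V), σ h v = σ h' v

/-- A play is compliant with the strategy `σ` of Player `i` (a `σ`-play) if at
every Player-`i` vertex it moves to the vertex chosen by `σ`. -/
def Compliant (G : GameGraph V) (i : Fin 2) (σ : Strategy V) (ρ : ℕ → V) : Prop :=
  ∀ k, G.owner (ρ k) = i → ρ (k + 1) = σ (List.ofFn fun j : Fin k => ρ j.val) (ρ k)

/-- `σ` is a winning strategy for Player `i` from `v`, where `W` is the set of
plays that are winning for Player `i`. -/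
def WinsFrom (G : GameGraph V) (i : Fin 2) (W : Set (ℕ → V)) (σ : Strategy V) (v : V) : Prop :=
  StratValid G i σ ∧
    ∀ ρ : ℕ → V, IsPlay G ρ → Compliant G i σ ρ → ρ 0 = v → ρ ∈ W

/-- The winning region of Player `i`: the vertices from which Player `i` has a
winning strategy. -/
def WinRegion (G : GameGraph V) (i : Fin 2) (W : Set (ℕ → V)) : Set V :=
  {v | ∃ σ, WinsFrom G i W σ v}

/-- A vertex occurs infinitely often along a play. -/
def InfOft (ρ : ℕ → V) (v : V) : Prop := ∀ n, ∃ k, n ≤ k ∧ ρ k = v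

/-- An edge is taken infinitely often along a play. -/
def EdgeInfOft (ρ : ℕ → V) (e : V × V) : Prop :=
  ∀ n, ∃ k, n ≤ k ∧ ρ k = e.1 ∧ ρ (k + 1) = e.2

/-- Parity objective: the maximal priority occurring infinitely often is even. -/
def ParityWin (P : V → ℕ) (ρ : ℕ → V) : Prop :=
  ∃ v, InfOft ρ v ∧ Even (P v) ∧ ∀ w, InfOft ρ w → P w ≤ P v

/-- The set of source vertices of a set of edges. -/
def srcSet (H : Set (V × V)) : Set V := {u | ∃ w, (u, w) ∈ H}

/-- Group transition fairness (live group) assumption: for every live group `H`,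
if some source vertex of `H` occurs infinitely often, then some edge of `H` is
taken infinitely often. -/
def psiGlive (Hc : Set (Set (V × V))) (ρ : ℕ → V) : Prop :=
  ∀ H ∈ Hc, (∃ u ∈ srcSet H, InfOft ρ u) → ∃ e ∈ H, EdgeInfOft ρ e

/-- Vertices of the game `𝔊^φ` built from a 3-SAT formula `φ` with `k` clauses
over `m` variables: the Player-1 vertex `v0`, a Player-0 vertex per clause,
Player-1 vertices `lit x b` (the literal `x_x` if `b = true`, `¬x_x` if
`b = false`) and `litP x b` (the primed copy `y'`), and the Player-0 target
vertex `target` (the vertex `☺`). -/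
inductive SatV (m k : ℕ) : Type
  | v0 : SatV m k
  | clause : Fin k → SatV m k
  | lit : Fin m → Bool → SatV m k
  | litP : Fin m → Bool → SatV m k
  | target : SatV m k

/-- Ownership: clause vertices and the target belong to Player 0, all other
vertices to Player 1. -/
def satOwner {m k : ℕ} : SatV m k → Fin 2
  | SatV.clause _ => 0
  | SatV.target => 0
  | _ => 1

/-- Edges of `𝔊^φ`, where `φ i j` is the `j`-th literal of the `i`-th clause. -/
def satE {m k : ℕ} (φ : Fin k → Fin 3 → Fin m × Bool) : SatV m k → SatV m k → Prop
  | SatV.v0, SatV.clause _ => True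
  | SatV.clause i, SatV.lit x b => ∃ j, φ i j = (x, b)
  | SatV.lit _ _, SatV.target => True
  | SatV.lit x b, SatV.litP y c => x = y ∧ b = c
  | SatV.litP _ _, SatV.v0 => True
  | SatV.target, SatV.target => True
  | _, _ => False

/-- The game graph of `𝔊^φ`. -/
def satGame {m k : ℕ} (φ : Fin k → Fin 3 → Fin m × Bool) (hk : 0 < k) :
    GameGraph (SatV m k) where
  owner := satOwner
  E := satE φ
  exists_succ := by
    intro v
    cases v with
    | v0 => exact ⟨SatV.clause ⟨0, hk⟩, trivial⟩
    | clause i => exact ⟨SatV.lit (φ i 0).1 (φ i 0).2, ⟨0, rfl⟩⟩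
    | lit x b => exact ⟨SatV.target, trivial⟩
    | litP x b => exact ⟨SatV.v0, trivial⟩
    | target => exact ⟨SatV.target, trivial⟩

/-- The live group `H_x^1 = {(x_x, ☺), ((¬x_x)', v0)}`. -/
def liveH1 {m k : ℕ} (x : Fin m) : Set (SatV m k × SatV m k) :=
  {(SatV.lit x true, SatV.target), (SatV.litP x false, SatV.v0)}

/-- The live group `H_x^2 = {(¬x_x, ☺), (x_x', v0)}`. -/
def liveH2 {m k : ℕ} (x : Fin m) : Set (SatV m k × SatV m k) :=
  {(SatV.lit x false, SatV.target), (SatV.litP x true, SatV.v0)}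

/-- The set `ℋ = {H_x^1, H_x^2 : x}` of live groups of `𝔊^φ`. -/
def satH (m k : ℕ) : Set (Set (SatV m k × SatV m k)) :=
  {H | ∃ x : Fin m, H = liveH1 x ∨ H = liveH2 x}

/-- The set of plays winning for Player 0 in the augmented reachability game
`𝔊^φ = (G, ◇{☺}, ψ_glive(ℋ))`. -/
def satWin0 (m k : ℕ) : Set (ℕ → SatV m k) :=
  {ρ | psiGlive (satH m k) ρ → ∃ n, ρ n = SatV.target}

/-- If `L` is a set of literals containing, for each variable `x`,
exactly one of `x` and `¬x`, such that every clause of `φ` contains a literal of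
`L`, then every positional Player-0 strategy `σ` that maps each clause vertex
`c_i` to some literal of `C_i` belonging to `L` (and keeps the self-loop at the
target) is winning for Player 0 from `v0` in the augmented reachability game
`𝔊^φ`. -/
theorem stmt6 (m k : ℕ) (hk : 0 < k) (φ : Fin k → Fin 3 → Fin m × Bool)
    (L : Set (Fin m × Bool))
    (hL : ∀ x : Fin m, ((x, true) ∈ L ↔ (x, false) ∉ L))
    (hLsat : ∀ i : Fin k, ∃ j : Fin 3, φ i j ∈ L)
    (σ : Strategy (SatV m k))
    (hpos : Positional σ)
    (htarget : ∀ h, σ h SatV.target = SatV.target)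
    (hclause : ∀ (h : List (SatV m k)) (i : Fin k), ∃ (x : Fin m) (b : Bool),
      σ h (SatV.clause i) = SatV.lit x b ∧ (x, b) ∈ L ∧ ∃ j : Fin 3, φ i j = (x, b)) :
    WinsFrom (satGame φ hk) 0 (satWin0 m k) σ SatV.v0 := by
  constructor
  · intro h v hv
    cases v with
    | clause i =>
        obtain ⟨x, b, hσ, _, j, hj⟩ := hclause h i
        show satE φ (SatV.clause i) (σ h (SatV.clause i))
        rw [hσ]; exact ⟨j, hj⟩
    | target =>
        show satE φ SatV.target (σ h SatV.target)
        rw [htarget]; trivial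
    | v0 => simp [satGame, satOwner] at hv
    | lit x b => simp [satGame, satOwner] at hv
    | litP x b => simp [satGame, satOwner] at hv
  · intro ρ hplay hcomp h0
    show psiGlive (satH m k) ρ → ∃ n, ρ n = SatV.target
    intro hglive
    by_contra hne
    push_neg at hne
    -- compliance at clause vertices
    have hstep : ∀ n (i : Fin k), ρ n = SatV.clause i →
        ∃ x b, ρ (n+1) = SatV.lit x b ∧ (x, b) ∈ L := by
      intro n i hn
      have hc := hcomp n (by show satOwner (ρ n) = 0; rw [hn]; rfl)
      obtain ⟨x, b, hσ, hmem, _⟩ := hclause (List.ofFn fun j : Fin n => ρ j.val) i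
      rw [hn] at hc
      exact ⟨x, b, hc.trans hσ, hmem⟩
    -- any lit vertex visited belongs to L
    have hlitL : ∀ n x b, ρ n = SatV.lit x b → (x, b) ∈ L := by
      intro n x b hn
      cases n with
      | zero => rw [h0] at hn; exact absurd hn (by simp)
      | succ s =>
        have he : satE φ (ρ s) (ρ (s+1)) := hplay s
        rw [hn] at he
        cases hs : ρ s with
        | clause i =>
            obtain ⟨x', b', h1, h2⟩ := hstep s i hs
            rw [h1] at hn
            injection hn with e1 e2
            rw [← e1, ← e2]; exact h2
        | v0 => rw [hs] at he; exact absurd he (by simp [satE])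
        | lit y c => rw [hs] at he; exact absurd he (by simp [satE])
        | litP y c => rw [hs] at he; exact absurd he (by simp [satE])
        | target => exact absurd hs (hne s)
    -- any litP vertex visited belongs to L
    have hlitPL : ∀ n x b, ρ n = SatV.litP x b → (x, b) ∈ L := by
      intro n x b hn
      cases n with
      | zero => rw [h0] at hn; exact absurd hn (by simp)
      | succ s =>
        have he : satE φ (ρ s) (ρ (s+1)) := hplay s
        rw [hn] at he
        cases hs : ρ s with
        | lit y c =>
            rw [hs] at he
            obtain ⟨e1, e2⟩ := he
            rw [← e1, ← e2]
            exact hlitL s y c hs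
        | v0 => rw [hs] at he; exact absurd he (by simp [satE])
        | clause i => rw [hs] at he; exact absurd he (by simp [satE])
        | litP y c => rw [hs] at he; exact absurd he (by simp [satE])
        | target => exact absurd hs (hne s)
    -- successor of v0 is a clause vertex
    have hv0succ : ∀ n, ρ n = SatV.v0 → ∃ i, ρ (n+1) = SatV.clause i := by
      intro n hn
      have he : satE φ (ρ n) (ρ (n+1)) := hplay n
      rw [hn] at he
      cases hs : ρ (n+1) with
      | clause i => exact ⟨i, rfl⟩
      | v0 => rw [hs] at he; exact absurd he (by simp [satE])
      | lit y c => rw [hs] at he; exact absurd he (by simp [satE])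
      | litP y c => rw [hs] at he; exact absurd he (by simp [satE])
      | target => rw [hs] at he; exact absurd he (by simp [satE])
    -- successor of a lit vertex (no target ever) is its primed copy
    have hlitsucc : ∀ n x b, ρ n = SatV.lit x b → ρ (n+1) = SatV.litP x b := by
      intro n x b hn
      have he : satE φ (ρ n) (ρ (n+1)) := hplay n
      rw [hn] at he
      cases hs : ρ (n+1) with
      | litP y c =>
          rw [hs] at he
          obtain ⟨e1, e2⟩ := he
          rw [e1, e2]
      | v0 => rw [hs] at he; exact absurd he (by simp [satE])
      | lit y c => rw [hs] at he; exact absurd he (by simp [satE])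
      | clause i => rw [hs] at he; exact absurd he (by simp [satE])
      | target => exact absurd hs (hne (n+1))
    -- successor of a litP vertex is v0
    have hlitPsucc : ∀ n x b, ρ n = SatV.litP x b → ρ (n+1) = SatV.v0 := by
      intro n x b hn
      have he : satE φ (ρ n) (ρ (n+1)) := hplay n
      rw [hn] at he
      cases hs : ρ (n+1) with
      | v0 => rfl
      | litP y c => rw [hs] at he; exact absurd he (by simp [satE])
      | lit y c => rw [hs] at he; exact absurd he (by simp [satE])
      | clause i => rw [hs] at he; exact absurd he (by simp [satE])
      | target => rw [hs] at he; exact absurd he (by simp [satE])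
    -- from every position, a lit vertex is reached soon
    have hreach : ∀ n, ∃ n', n ≤ n' ∧ ∃ x b, ρ n' = SatV.lit x b := by
      intro n
      cases h : ρ n with
      | v0 =>
          obtain ⟨i, h1⟩ := hv0succ n h
          obtain ⟨x, b, h2, _⟩ := hstep (n+1) i h1
          exact ⟨n+2, by omega, x, b, h2⟩
      | clause i =>
          obtain ⟨x, b, h2, _⟩ := hstep n i h
          exact ⟨n+1, by omega, x, b, h2⟩
      | lit x b => exact ⟨n, le_rfl, x, b, h⟩
      | litP x b =>
          have h1 := hlitPsucc n x b h
          obtain ⟨i, h2⟩ := hv0succ (n+1) h1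
          obtain ⟨x', b', h3, _⟩ := hstep (n+2) i h2
          exact ⟨n+3, by omega, x', b', h3⟩
      | target => exact absurd h (hne n)
    choose N hle X B hXB using hreach
    -- pigeonhole: some literal vertex occurs infinitely often
    obtain ⟨⟨x0, b0⟩, hfib⟩ := Finite.exists_infinite_fiber (fun n => ((X n, B n) : Fin m × Bool))
    have hfib' : Set.Infinite ((fun n => ((X n, B n) : Fin m × Bool)) ⁻¹' {(x0, b0)}) := by
      exact Set.infinite_coe_iff.mp hfib
    have hio : InfOft ρ (SatV.lit x0 b0) := by
      intro n
      obtain ⟨n', hn', hlt⟩ := hfib'.exists_gt n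
      simp only [Set.mem_preimage, Set.mem_singleton_iff, Prod.mk.injEq] at hn'
      refine ⟨N n', le_trans (le_of_lt hlt) (hle n'), ?_⟩
      rw [hXB n', hn'.1, hn'.2]
    have hmem : (x0, b0) ∈ L := by
      obtain ⟨k', _, hk'⟩ := hio 0
      exact hlitL k' x0 b0 hk'
    -- apply the live group assumption
    cases b0 with
    | true =>
        have hnotL : (x0, false) ∉ L := (hL x0).mp hmem
        obtain ⟨e, heH, hEdge⟩ := hglive (liveH1 x0) ⟨x0, Or.inl rfl⟩
          ⟨SatV.lit x0 true, ⟨SatV.target, by simp [liveH1]⟩, hio⟩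
        rcases heH with he | he
        · obtain ⟨k', _, _, h2⟩ := hEdge 0
          rw [he] at h2
          exact hne (k'+1) h2
        · obtain ⟨k', _, h1, _⟩ := hEdge 0
          rw [Set.mem_singleton_iff] at he
          rw [he] at h1
          exact hnotL (hlitPL k' x0 false h1)
    | false =>
        have hnotL : (x0, true) ∉ L := fun hc => (hL x0).mp hc hmem
        obtain ⟨e, heH, hEdge⟩ := hglive (liveH2 x0) ⟨x0, Or.inr rfl⟩
          ⟨SatV.lit x0 false, ⟨SatV.target, by simp [liveH2]⟩, hio⟩
        rcases heH with he | he
        · obtain ⟨k', _, _, h2⟩ := hEdge 0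
          rw [he] at h2
          exact hne (k'+1) h2
        · obtain ⟨k', _, h1, _⟩ := hEdge 0
          rw [Set.mem_singleton_iff] at he
          rw [he] at h1
          exact hnotL (hlitPL k' x0 true h1)
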